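/- Let k ≥ 0 be an integer and let h ∈ SL₂(ℤ_p) with h − 1 ∈ p^{2k+1}·M₂(ℤ_p) (SL₂(F) acts E-linearly on V = E² by matrix multiplication and lies in the unitary group of ⟨·,·⟩). Then for every v ∈ p^{−k}·Γ and every w = c + p^{−1}d·δ with c, d ∈ O_E: (i) χ(Tr_{E/F}(⟨v, c(h)v⟩ · N_{D/F}(w))) = 1, where c(h) = (1 − h)(1 + h)^{−1} is the Cayley transform; and (ii) (c(h)v) ⊗ w ∈ A. -/

import Mathlib

noncomputable section
open Matrix

/-- The image of `p` in `E`. -/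
def pE (p : ℕ) [Fact p.Prime] (E : Type) [Field E] [Algebra ℚ_[p] E] : E :=
  algebraMap ℚ_[p] E (p : ℚ_[p])

/-- The ring of integers `O_E = ℤ_p + ℤ_p·α` of the unramified quadratic extension
`E = F(α)`, as a set. -/
def OE (p : ℕ) [Fact p.Prime] (E : Type) [Field E] [Algebra ℚ_[p] E] (α : E) : Set E :=
  {x | ∃ a b : ℤ_[p],
    x = algebraMap ℚ_[p] E (a : ℚ_[p]) + algebraMap ℚ_[p] E (b : ℚ_[p]) * α}

/-- The element `x_{a,b} = !![a, b; p·conj b, conj a]` of the quaternion division algebra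
`D ⊆ M₂(E)`. -/
def qmat (p : ℕ) [Fact p.Prime] (E : Type) [Field E] [Algebra ℚ_[p] E]
    (conj : E → E) (a b : E) : Matrix (Fin 2) (Fin 2) E :=
  !![a, b; pE p E * conj b, conj a]

/-- The uniformizer `δ = x_{0,1}` of `D`, with `δ² = p`. -/
def deltaM (p : ℕ) [Fact p.Prime] (E : Type) [Field E] [Algebra ℚ_[p] E] :
    Matrix (Fin 2) (Fin 2) E :=
  !![0, 1; pE p E, 0]

/-- The maximal order `O_D = {x_{a,b} : a, b ∈ O_E}` of `D`, as a set. -/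
def ODset (p : ℕ) [Fact p.Prime] (E : Type) [Field E] [Algebra ℚ_[p] E]
    (α : E) (conj : E → E) : Set (Matrix (Fin 2) (Fin 2) E) :=
  {m | ∃ a b : E, a ∈ OE p E α ∧ b ∈ OE p E α ∧ m = qmat p E conj a b}

/-- The norm-one group `D¹ = {x ∈ D : det x = 1}`, as a set. -/
def D1set (p : ℕ) [Fact p.Prime] (E : Type) [Field E] [Algebra ℚ_[p] E]
    (conj : E → E) : Set (Matrix (Fin 2) (Fin 2) E) :=
  {m | (∃ a b : E, m = qmat p E conj a b) ∧ m.det = 1}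

/-- `vDge p E α conj r m` says `v_D(m) ≥ r`, i.e. `m ∈ δ^r·O_D = P_D^r`. -/
def vDge (p : ℕ) [Fact p.Prime] (E : Type) [Field E] [Algebra ℚ_[p] E]
    (α : E) (conj : E → E) (r : ℕ) (m : Matrix (Fin 2) (Fin 2) E) : Prop :=
  ∃ yy ∈ ODset p E α conj, m = deltaM p E ^ r * yy

/-- `x ∈ P_E = p·O_E`. -/
def inPE (p : ℕ) [Fact p.Prime] (E : Type) [Field E] [Algebra ℚ_[p] E]
    (α : E) (x : E) : Prop :=
  ∃ c ∈ OE p E α, x = pE p E * c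

/-- The pure tensor `v ⊗ w ∈ 𝒲 = V ⊗_E W` in coordinates: `(v ⊗ w) i j = v i · conj (w j)`
(the `E`-structure on `W`-coordinates is twisted by conjugation, so that the symplectic
form below is well defined on `𝒲`).  Here `w = (c, d)` stands for `c + d·δ ∈ W = D`. -/
def tens (E : Type) [Field E] (conj : E → E) (v w : Fin 2 → E) :
    Matrix (Fin 2) (Fin 2) E :=
  Matrix.of fun i j => v i * conj (w j)

/-- The symplectic form `⟨⟨x, y⟩⟩ = Tr_{E/F}(⟨v,v'⟩·conj(⟨w,w'⟩'))` of `𝒲`, written in the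
coordinates above, with values `t + conj t` landing in (the image of) `F`. -/
def sympE (p : ℕ) [Fact p.Prime] (E : Type) [Field E] [Algebra ℚ_[p] E]
    (conj : E → E) (x y : Matrix (Fin 2) (Fin 2) E) : E :=
  (x 0 0 * conj (y 1 0) - pE p E * (x 0 1 * conj (y 1 1))
      - x 1 0 * conj (y 0 0) + pE p E * (x 1 1 * conj (y 0 1)))
    + conj (x 0 0 * conj (y 1 0) - pE p E * (x 0 1 * conj (y 1 1))
      - x 1 0 * conj (y 0 0) + pE p E * (x 1 1 * conj (y 0 1)))

/-- The lattice `A = Γ ⊗ Γ'`: the `O_E`-span (= additive span) of the pure tensors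
`v ⊗ w` with `v ∈ Γ = O_E²` and `w ∈ Γ' = O_E + O_E·δ`. -/
def Alat (p : ℕ) [Fact p.Prime] (E : Type) [Field E] [Algebra ℚ_[p] E]
    (α : E) (conj : E → E) : AddSubgroup (Matrix (Fin 2) (Fin 2) E) :=
  AddSubgroup.closure
    {m | ∃ v w : Fin 2 → E, (∀ i, v i ∈ OE p E α) ∧ (∀ j, w j ∈ OE p E α) ∧
      m = tens E conj v w}

/-- `x` lies in (the image in `E` of) `ℤ_p`. -/
def integralF (p : ℕ) [Fact p.Prime] (E : Type) [Field E] [Algebra ℚ_[p] E]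
    (x : E) : Prop :=
  ∃ s : ℤ_[p], x = algebraMap ℚ_[p] E ((s : ℚ_[p]))

/-- The dual lattice `L* = {z ∈ 𝒲 : ⟨⟨z, l⟩⟩ ∈ ℤ_p for all l ∈ L}`. -/
def dualLat (p : ℕ) [Fact p.Prime] (E : Type) [Field E] [Algebra ℚ_[p] E]
    (α : E) (conj : E → E) (L : Set (Matrix (Fin 2) (Fin 2) E)) :
    Set (Matrix (Fin 2) (Fin 2) E) :=
  {zz | ∀ l ∈ L, integralF p E (sympE p E conj zz l)}

/-- The entrywise embedding `M₂(ℤ_p) → M₂(E)`. -/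
def toE (p : ℕ) [Fact p.Prime] (E : Type) [Field E] [Algebra ℚ_[p] E]
    (m : Matrix (Fin 2) (Fin 2) ℤ_[p]) : Matrix (Fin 2) (Fin 2) E :=
  m.map fun t => algebraMap ℚ_[p] E (t : ℚ_[p])

/-- The Cayley transform `c(m) = (1 - m)(1 + m)⁻¹`. -/
def cay {E : Type} [Field E] (m : Matrix (Fin 2) (Fin 2) E) : Matrix (Fin 2) (Fin 2) E :=
  (1 - m) * (1 + m)⁻¹

/-- The skew-Hermitian form `⟨x, y⟩ = x₁·conj y₂ - x₂·conj y₁` on `V = E²`. -/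
def sesqV (E : Type) [Field E] (conj : E → E) (x y : Fin 2 → E) : E :=
  x 0 * conj (y 1) - x 1 * conj (y 0)

/-- `Tr_{E/F}(x) = x + conj x`, as an element of `E`. -/
def trEl (E : Type) [Field E] (conj : E → E) (x : E) : E := x + conj x

/-!
Since `h ≡ 1 mod p^{2k+1}` and `p` is odd, `1 + h ≡ 2` is invertible over `ℤ_p`, so the Cayley
transform `c(h)` is an integral matrix divisible by `p^{2k+1}`, and `c(h)v = p^{k+1}u` with
`u ∈ Γ`. In `⟨v, c(h)v⟩·N(w)` the factor `p^{k+1}` absorbs the `p^{-k}` of `v` and the `p^{-1}`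
of `N(w)`, leaving an element of `O_E`, whose trace lies in `ℤ_p` and is killed by `χ`.
Likewise `(c(h)v) ⊗ w = u ⊗ p^{k+1}w` with `p^{k+1}w ∈ Γ'`.
-/

section Integers

variable (p : ℕ) [Fact p.Prime] (E : Type) [Field E] [Algebra ℚ_[p] E] (α : E)

def OE.subring (z : ℤ_[p]) (hα : α * α = algebraMap ℚ_[p] E (z : ℚ_[p])) : Subring E where
  carrier := OE p E α
  zero_mem' := ⟨0, 0, by simp⟩
  one_mem' := ⟨1, 0, by simp⟩
  add_mem' := by
    rintro _ _ ⟨a, b, rfl⟩ ⟨a', b', rfl⟩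
    exact ⟨a + a', b + b', by push_cast [map_add]; ring⟩
  neg_mem' := by
    rintro _ ⟨a, b, rfl⟩
    exact ⟨-a, -b, by push_cast [map_neg]; ring⟩
  mul_mem' := by
    rintro _ _ ⟨a, b, rfl⟩ ⟨a', b', rfl⟩
    refine ⟨a * a' + b * b' * z, a * b' + b * a', ?_⟩
    push_cast [map_add, map_mul]
    linear_combination (algebraMap ℚ_[p] E b * algebraMap ℚ_[p] E b') * hα

theorem algebraMap_mem_OE (s : ℤ_[p]) : algebraMap ℚ_[p] E (s : ℚ_[p]) ∈ OE p E α :=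
  ⟨s, 0, by simp⟩

theorem pE_eq_algebraMap : pE p E = algebraMap ℚ_[p] E ((p : ℤ_[p]) : ℚ_[p]) := by
  rw [pE, PadicInt.coe_natCast]

theorem pE_mem_OE : pE p E ∈ OE p E α := by
  rw [pE_eq_algebraMap]
  exact algebraMap_mem_OE p E α _

variable {p E α} (conj : E →ₐ[ℚ_[p]] E)

theorem conj_mem_OE (hconj : conj α = -α) {x : E} (hx : x ∈ OE p E α) :
    conj x ∈ OE p E α := by
  obtain ⟨a, b, rfl⟩ := hx
  refine ⟨a, -b, ?_⟩
  rw [map_add, map_mul, AlgHom.commutes, AlgHom.commutes, hconj]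
  push_cast [map_neg]
  ring

theorem integralF_trEl_of_mem_OE (hconj : conj α = -α) {x : E} (hx : x ∈ OE p E α) :
    integralF p E (trEl E conj x) := by
  obtain ⟨a, b, rfl⟩ := hx
  refine ⟨a + a, ?_⟩
  rw [trEl, map_add, map_mul, AlgHom.commutes, AlgHom.commutes, hconj]
  push_cast [map_add]
  ring

end Integers

theorem RingHom.mapMatrix_nonsing_inv {n R S : Type*} [Fintype n] [DecidableEq n] [CommRing R]
    [CommRing S] (f : R →+* S) {A : Matrix n n R} (hA : IsUnit A.det) :
    f.mapMatrix A⁻¹ = (f.mapMatrix A)⁻¹ :=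
  (Matrix.inv_eq_left_inv (by rw [← map_mul, Matrix.nonsing_inv_mul _ hA, map_one])).symm

theorem cay_mapMatrix {R : Type*} {K : Type} [CommRing R] [Field K] (f : R →+* K)
    {H : Matrix (Fin 2) (Fin 2) R} (hH : IsUnit (1 + H).det) :
    cay (f.mapMatrix H) = f.mapMatrix ((1 - H) * (1 + H)⁻¹) := by
  rw [cay, map_mul, map_sub, map_one, f.mapMatrix_nonsing_inv hH, map_add, map_one]

theorem dvd_cayley_apply {n R : Type*} [Fintype n] [DecidableEq n] [CommRing R] {q : R}
    {H : Matrix n n R} (hH : ∀ i j, q ∣ (H - 1) i j) (i j : n) :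
    q ∣ ((1 - H) * (1 + H)⁻¹) i j := by
  rw [← neg_sub, Matrix.neg_mul, Matrix.neg_apply, dvd_neg, Matrix.mul_apply]
  exact Finset.dvd_sum fun l _ => (hH i l).mul_right _

theorem PadicInt.isUnit_det_one_add {p : ℕ} [Fact p.Prime] (hp : p ≠ 2)
    {H : Matrix (Fin 2) (Fin 2) ℤ_[p]} (hH : ∀ i j, (p : ℤ_[p]) ∣ (H - 1) i j) :
    IsUnit (1 + H).det := by
  have hker : ∀ x : ℤ_[p], (p : ℤ_[p]) ∣ x → PadicInt.toZMod x = 0 := fun x hx => by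
    rwa [← RingHom.mem_ker, PadicInt.ker_toZMod, PadicInt.maximalIdeal_eq_span_p,
      Ideal.mem_span_singleton]
  have hHbar : PadicInt.toZMod.mapMatrix H = 1 := by
    rw [← sub_eq_zero, ← map_one PadicInt.toZMod.mapMatrix, ← map_sub]
    ext i j
    exact hker _ (hH i j)
  have htwo : (2 : ZMod p) ≠ 0 := fun h2 =>
    hp ((Nat.prime_dvd_prime_iff_eq Fact.out Nat.prime_two).mp
      ((ZMod.natCast_eq_zero_iff 2 p).mp (by exact_mod_cast h2)))
  rw [← IsLocalRing.notMem_maximalIdeal, ← PadicInt.ker_toZMod, RingHom.mem_ker,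
    RingHom.map_det, map_add, map_one, hHbar, Matrix.det_fin_two]
  simpa [Matrix.one_apply, one_add_one_eq_two] using htwo

section Lattices

variable {p : ℕ} [Fact p.Prime] {E : Type} [Field E] [Algebra ℚ_[p] E] {α : E}

theorem pE_ne_zero : pE p E ≠ 0 :=
  (map_ne_zero _).mpr (Nat.cast_ne_zero.mpr (Fact.out : p.Prime).ne_zero)

theorem conj_pE (conj : E →ₐ[ℚ_[p]] E) : conj (pE p E) = pE p E :=
  conj.commutes _

theorem toE_eq_mapMatrix (m : Matrix (Fin 2) (Fin 2) ℤ_[p]) :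
    toE p E m = ((algebraMap ℚ_[p] E).comp PadicInt.Coe.ringHom).mapMatrix m :=
  rfl

theorem exists_toE_mulVec_eq_pE_pow_smul (z : ℤ_[p])
    (hα : α * α = algebraMap ℚ_[p] E (z : ℚ_[p])) {l m : ℕ}
    {C : Matrix (Fin 2) (Fin 2) ℤ_[p]} (hC : ∀ i j, (p : ℤ_[p]) ^ (l + m) ∣ C i j)
    {v : Fin 2 → E} (hv : ∀ i, pE p E ^ m * v i ∈ OE p E α) :
    ∃ u : Fin 2 → E, (∀ i, u i ∈ OE p E α) ∧ toE p E C *ᵥ v = pE p E ^ l • u := by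
  choose C' hC' using hC
  let O := OE.subring p E α z hα
  refine ⟨toE p E (Matrix.of C') *ᵥ fun j => pE p E ^ m * v j, fun i => ?_, ?_⟩
  · simp only [Matrix.mulVec, dotProduct, toE, Matrix.map_apply, Matrix.of_apply]
    exact O.sum_mem fun j _ => O.mul_mem (algebraMap_mem_OE p E α _) (hv j)
  · ext i
    fin_cases i <;>
      simp [Matrix.mulVec, dotProduct, toE, hC', Fin.sum_univ_two, pE_eq_algebraMap] <;> ring

theorem sesqV_smul_left {F : Type*} [FunLike F E E] (σ : F) (a : E) (x y : Fin 2 → E) :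
    sesqV E σ (a • x) y = a * sesqV E σ x y := by
  simp only [sesqV, Pi.smul_apply, smul_eq_mul]
  ring

theorem sesqV_smul_right {F : Type*} [FunLike F E E] [MulHomClass F E E] (σ : F) (a : E)
    (x y : Fin 2 → E) : sesqV E σ x (a • y) = σ a * sesqV E σ x y := by
  simp only [sesqV, Pi.smul_apply, smul_eq_mul, map_mul]
  ring

theorem tens_smul_left {F : Type*} [FunLike F E E] [MulHomClass F E E] (σ : F) {a : E}
    (ha : σ a = a) (v w : Fin 2 → E) : tens E σ (a • v) w = tens E σ v (a • w) := by
  ext i j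
  simp only [tens, Matrix.of_apply, Pi.smul_apply, smul_eq_mul, map_mul, ha]
  ring

theorem tens_mem_Alat (conj : E → E) {v w : Fin 2 → E} (hv : ∀ i, v i ∈ OE p E α)
    (hw : ∀ j, w j ∈ OE p E α) : tens E conj v w ∈ Alat p E α conj :=
  AddSubgroup.subset_closure ⟨v, w, hv, hw, rfl⟩

theorem sesqV_pE_pow_smul_mul_norm_mem_OE (z : ℤ_[p])
    (hα : α * α = algebraMap ℚ_[p] E (z : ℚ_[p])) (conj : E →ₐ[ℚ_[p]] E) (hconj : conj α = -α)
    (k : ℕ) {u v : Fin 2 → E} (hu : ∀ i, u i ∈ OE p E α)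
    (hv : ∀ i, pE p E ^ k * v i ∈ OE p E α)
    {c d : E} (hc : c ∈ OE p E α) (hd : d ∈ OE p E α) :
    sesqV E conj v (pE p E ^ (k + 1) • u) * (c * conj c - (pE p E)⁻¹ * (d * conj d))
      ∈ OE p E α := by
  let O := OE.subring p E α z hα
  have hy : sesqV E conj (pE p E ^ k • v) u ∈ O :=
    O.sub_mem (O.mul_mem (hv 0) (conj_mem_OE conj hconj (hu 1)))
      (O.mul_mem (hv 1) (conj_mem_OE conj hconj (hu 0)))
  have key : sesqV E conj v (pE p E ^ (k + 1) • u) * (c * conj c - (pE p E)⁻¹ * (d * conj d))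
      = sesqV E conj (pE p E ^ k • v) u * (pE p E * (c * conj c) - d * conj d) := by
    rw [sesqV_smul_right, sesqV_smul_left, map_pow, conj_pE]
    field_simp [pE_ne_zero]
    ring
  rw [key]
  exact O.mul_mem hy (O.sub_mem (O.mul_mem (pE_mem_OE p E α)
    (O.mul_mem hc (conj_mem_OE conj hconj hc))) (O.mul_mem hd (conj_mem_OE conj hconj hd)))

theorem tens_pE_pow_smul_mem_Alat (z : ℤ_[p]) (hα : α * α = algebraMap ℚ_[p] E (z : ℚ_[p]))
    (conj : E →ₐ[ℚ_[p]] E) (k : ℕ) {u : Fin 2 → E} (hu : ∀ i, u i ∈ OE p E α)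
    {c d : E} (hc : c ∈ OE p E α) (hd : d ∈ OE p E α) :
    tens E conj (pE p E ^ (k + 1) • u) ![c, (pE p E)⁻¹ * d] ∈ Alat p E α conj := by
  let O := OE.subring p E α z hα
  rw [tens_smul_left conj (by rw [map_pow, conj_pE])]
  refine tens_mem_Alat conj hu fun j => ?_
  fin_cases j
  · exact O.mul_mem (O.pow_mem (pE_mem_OE p E α) _) hc
  · have : pE p E ^ (k + 1) * ((pE p E)⁻¹ * d) = pE p E ^ k * d := by
      field_simp [pE_ne_zero]
      ring
    simp only [Pi.smul_apply, smul_eq_mul, Fin.mk_one, Matrix.cons_val_one,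
      Matrix.cons_val_fin_one, this]
    exact O.mul_mem (O.pow_mem (pE_mem_OE p E α) k) hd

end Lattices

theorem stmt14_general (p : ℕ) [Fact p.Prime] (hp : p ≠ 2)
    (z : ℤ_[p]ˣ)
    (E : Type) [Field E] [Algebra ℚ_[p] E] (α : E)
    (hα : α * α = algebraMap ℚ_[p] E ((z : ℤ_[p]) : ℚ_[p]))
    (conj : E →ₐ[ℚ_[p]] E) (hconj : conj α = -α)
    (TrF : E → ℚ_[p]) (hTrF : ∀ t : ℚ_[p], TrF (algebraMap ℚ_[p] E t) = t)
    (ψ : AddChar ℚ_[p] ℂˣ)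
    (hψ1 : ∀ t : ℤ_[p], ψ ((p : ℚ_[p]) * (t : ℚ_[p])) = 1)
    (k : ℕ) (h : Matrix.SpecialLinearGroup (Fin 2) ℤ_[p])
    (hh : ∀ i j : Fin 2,
      ((p : ℤ_[p]) ^ (2 * k + 1)) ∣ ((h : Matrix (Fin 2) (Fin 2) ℤ_[p]) - 1) i j)
    (v : Fin 2 → E) (hv : ∀ i, pE p E ^ k * v i ∈ OE p E α)
    (c d : E) (hc : c ∈ OE p E α) (hd : d ∈ OE p E α) :
    ψ ((p : ℚ_[p]) * TrF (trEl E conj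
        (sesqV E conj v ((cay (toE p E (h : Matrix (Fin 2) (Fin 2) ℤ_[p]))).mulVec v)
          * (c * conj c - (pE p E)⁻¹ * (d * conj d))))) = 1 ∧
    tens E conj ((cay (toE p E (h : Matrix (Fin 2) (Fin 2) ℤ_[p]))).mulVec v)
        ![c, (pE p E)⁻¹ * d] ∈ Alat p E α conj := by
  have hdet : IsUnit (1 + (h : Matrix (Fin 2) (Fin 2) ℤ_[p])).det :=
    PadicInt.isUnit_det_one_add hp fun i j => (dvd_pow_self _ (by omega)).trans (hh i j)
  obtain ⟨u, hu, hcay⟩ : ∃ u : Fin 2 → E, (∀ i, u i ∈ OE p E α) ∧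
      cay (toE p E h) *ᵥ v = pE p E ^ (k + 1) • u := by
    rw [toE_eq_mapMatrix, cay_mapMatrix _ hdet, ← toE_eq_mapMatrix]
    refine exists_toE_mulVec_eq_pE_pow_smul z hα (fun i j => ?_) hv
    rw [show k + 1 + k = 2 * k + 1 by ring]
    exact dvd_cayley_apply hh i j
  rw [hcay]
  refine ⟨?_, tens_pE_pow_smul_mem_Alat z hα conj k hu hc hd⟩
  obtain ⟨s, hs⟩ := integralF_trEl_of_mem_OE conj hconj
    (sesqV_pE_pow_smul_mul_norm_mem_OE z hα conj hconj k hu hv hc hd)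
  rw [hs, hTrF]
  exact hψ1 s

/-- for `k ≥ 0` and `h ∈ SL₂(ℤ_p)` with `h - 1 ∈ p^{2k+1}·M₂(ℤ_p)`, for every
`v ∈ p^{-k}·Γ` and every `w = c + p⁻¹·d·δ` with `c, d ∈ O_E`:
(i) `χ(Tr_{E/F}(⟨v, c(h)v⟩·N_{D/F}(w))) = 1`, where `χ(t) = ψ(p·t)`, `c(h)` is the Cayley
transform and `N_{D/F}(w) = c·c̄ - p⁻¹·d·d̄`; and (ii) `(c(h)v) ⊗ w ∈ A`. -/
theorem stmt14 (p : ℕ) [Fact p.Prime] (hp : p ≠ 2)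
    (z : ℤ_[p]ˣ) (hz : ¬ ∃ w : ℤ_[p], w * w = (z : ℤ_[p]))
    (E : Type) [Field E] [Algebra ℚ_[p] E] (α : E)
    (hα : α * α = algebraMap ℚ_[p] E ((z : ℤ_[p]) : ℚ_[p]))
    (hα0 : α ∉ Set.range (algebraMap ℚ_[p] E))
    (hspan : ∀ x : E, ∃ a b : ℚ_[p], x = algebraMap ℚ_[p] E a + algebraMap ℚ_[p] E b * α)
    (conj : E →ₐ[ℚ_[p]] E) (hconj : conj α = -α)
    (TrF : E → ℚ_[p]) (hTrF : ∀ t : ℚ_[p], TrF (algebraMap ℚ_[p] E t) = t)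
    (ψ : AddChar ℚ_[p] ℂˣ)
    (hψ1 : ∀ t : ℤ_[p], ψ ((p : ℚ_[p]) * (t : ℚ_[p])) = 1)
    (hψ2 : ∃ t : ℤ_[p], ψ ((t : ℚ_[p])) ≠ 1)
    (k : ℕ) (h : Matrix.SpecialLinearGroup (Fin 2) ℤ_[p])
    (hh : ∀ i j : Fin 2,
      ((p : ℤ_[p]) ^ (2 * k + 1)) ∣ ((h : Matrix (Fin 2) (Fin 2) ℤ_[p]) - 1) i j)
    (v : Fin 2 → E) (hv : ∀ i, pE p E ^ k * v i ∈ OE p E α)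
    (c d : E) (hc : c ∈ OE p E α) (hd : d ∈ OE p E α) :
    ψ ((p : ℚ_[p]) * TrF (trEl E conj
        (sesqV E conj v ((cay (toE p E (h : Matrix (Fin 2) (Fin 2) ℤ_[p]))).mulVec v)
          * (c * conj c - (pE p E)⁻¹ * (d * conj d))))) = 1 ∧
    tens E conj ((cay (toE p E (h : Matrix (Fin 2) (Fin 2) ℤ_[p]))).mulVec v)
        ![c, (pE p E)⁻¹ * d] ∈ Alat p E α conj :=
  stmt14_general p hp z E α hα conj hconj TrF hTrF ψ hψ1 k h hh v hv c d hc hd
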